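/- (Least Action Principle) If α is an acceptable sequence of topplings that stabilizes η in a finite set V (i.e., after applying α every site of V has value 0 or ρ), and β is a legal sequence of topplings for η contained in V, then m_β(x) ≤ m_α(x) for every site x. -/

import Mathlib

/-!
Toppling a site never removes particles from the other sites, so an unstable site stays unstable
until it is itself toppled. Topplings at two distinct nonempty sites commute. Hence if `β` starts
with the unstable site `z ∈ V`, then `z` occurs in `α` (otherwise it would still be unstable after
`α`), and its first occurrence can be moved to the front of `α` without affecting acceptability or
the final state. Removing `z` from both sequences and inducting on `β` shows that `β` is a
sub-multiset of `α`.
-/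

namespace ARW

/-- The state of a site: `nat n` means `n` active particles, `rho` means one passive particle. -/
inductive Nrho where
  | nat : ℕ → Nrho
  | rho : Nrho
deriving DecidableEq

namespace Nrho

/-- Numerical value used to define the order `0 < ρ < 1 < 2 < ⋯`. -/
def val : Nrho → ℚ
  | nat n => (n : ℚ)
  | rho => 1/2

instance : LE Nrho := ⟨fun a b => a.val ≤ b.val⟩
instance : LT Nrho := ⟨fun a b => a.val < b.val⟩

/-- Adding one particle: `ρ + 1 = 2`. -/
def addOne : Nrho → Nrho
  | nat n => nat (n + 1)
  | rho => nat 2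

/-- Removing one particle (junk value on `0`): `ρ - 1 = 0`. -/
def subOne : Nrho → Nrho
  | nat n => nat (n - 1)
  | rho => nat 0

/-- The sleep operation `n ↦ n·ρ`: `1·ρ = ρ`, `n·ρ = n` for `n ≥ 2`, `ρ·ρ = ρ`
(junk value on `0`). -/
def sleep : Nrho → Nrho
  | nat 0 => nat 0
  | nat 1 => rho
  | nat (n + 2) => nat (n + 2)
  | rho => rho

end Nrho

/-- An instruction at a site: jump to a given site, or fall asleep. -/
inductive Instr (S : Type) where
  | jump : S → Instr S
  | sleep : Instr S
deriving DecidableEq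

/-- A configuration of the activated random walk system. -/
abbrev Config (S : Type) := S → Nrho

/-- A field of instructions `(τ^{x,j})`. -/
abbrev IField (S : Type) := S → ℕ → Instr S

variable {S : Type} [DecidableEq S]

/-- Apply one instruction at site `x`. -/
def applyInstr : Instr S → S → Config S → Config S
  | .jump y, x, η =>
      let η' := Function.update η x (η x).subOne
      Function.update η' y (η' y).addOne
  | .sleep, x, η => Function.update η x (η x).sleep

/-- Topple site `x`: use the next unused instruction at `x` and increment the odometer. -/
def topple (I : IField S) : Config S × (S → ℕ) → S → Config S × (S → ℕ)
  | (η, h), x => (applyInstr (I x (h x)) x η, Function.update h x (h x + 1))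

/-- Topple a finite sequence of sites, in order. -/
def toppleSeq (I : IField S) : Config S × (S → ℕ) → List S → Config S × (S → ℕ)
  | s, [] => s
  | s, x :: α => toppleSeq I (topple I s x) α

/-- `Phi I η α` is the configuration `Φ_α η` obtained from `η` by toppling
the sequence `α` (starting with odometer `0`). -/
def Phi (I : IField S) (η : Config S) (α : List S) : Config S :=
  (toppleSeq I (η, fun _ => 0) α).1

/-- The sequence `α` is acceptable from the state `(η, h)`: each toppled site has value `≥ ρ`,
i.e. different from `0`, when it is toppled. -/
def AcceptableFrom (I : IField S) : Config S × (S → ℕ) → List S → Prop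
  | _, [] => True
  | (η, h), x :: α => η x ≠ Nrho.nat 0 ∧ AcceptableFrom I (topple I (η, h) x) α

/-- The sequence `α` is legal from the state `(η, h)`: each toppled site is unstable,
i.e. has value `≥ 1`, when it is toppled. -/
def LegalFrom (I : IField S) : Config S × (S → ℕ) → List S → Prop
  | _, [] => True
  | (η, h), x :: α => Nrho.nat 1 ≤ η x ∧ LegalFrom I (topple I (η, h) x) α

/-- `α` is an acceptable sequence of topplings for the configuration `η`. -/
def Acceptable (I : IField S) (η : Config S) (α : List S) : Prop :=
  AcceptableFrom I (η, fun _ => 0) α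

/-- `α` is a legal sequence of topplings for the configuration `η`. -/
def Legal (I : IField S) (η : Config S) (α : List S) : Prop :=
  LegalFrom I (η, fun _ => 0) α

/-- Site `x` is stable for `η` if it carries no active particle. -/
def Stable (η : Config S) (x : S) : Prop := η x ≤ Nrho.rho

/-- `η` is stable in `V` if every site of `V` is stable. -/
def StableIn (η : Config S) (V : Finset S) : Prop := ∀ x ∈ V, Stable η x

end ARW

namespace ARW

namespace Nrho

theorem one_le_iff {a : Nrho} : nat 1 ≤ a ↔ ∃ n, a = nat (n + 1) := by
  constructor
  · intro h
    rcases a with (_ | n) | _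
    · exact absurd (show (1 : ℚ) ≤ 0 from h) (by norm_num)
    · exact ⟨n, rfl⟩
    · exact absurd (show (1 : ℚ) ≤ 1 / 2 from h) (by norm_num)
  · rintro ⟨n, rfl⟩
    show ((1 : ℕ) : ℚ) ≤ ((n + 1 : ℕ) : ℚ)
    exact_mod_cast Nat.le_add_left 1 n

theorem ne_nat_zero_of_one_le {a : Nrho} (h : nat 1 ≤ a) : a ≠ nat 0 := by
  obtain ⟨n, rfl⟩ := one_le_iff.1 h
  simp

theorem one_le_addOne (a : Nrho) : nat 1 ≤ a.addOne := by
  cases a with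
  | nat n => exact one_le_iff.2 ⟨n, rfl⟩
  | rho => exact one_le_iff.2 ⟨1, rfl⟩

theorem addOne_ne_nat_zero (a : Nrho) : a.addOne ≠ nat 0 :=
  ne_nat_zero_of_one_le (one_le_addOne a)

theorem not_le_rho_of_one_le {a : Nrho} (h : nat 1 ≤ a) : ¬ a ≤ rho := by
  obtain ⟨n, rfl⟩ := one_le_iff.1 h
  change ¬ ((n + 1 : ℕ) : ℚ) ≤ 1 / 2
  push_cast
  linarith [(n.cast_nonneg : (0 : ℚ) ≤ n)]

theorem subOne_addOne {a : Nrho} (h : a ≠ nat 0) : a.subOne.addOne = a.addOne.subOne := by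
  rcases a with (_ | n) | _
  · exact absurd rfl h
  all_goals rfl

theorem sleep_addOne {a : Nrho} (h : a ≠ nat 0) : a.sleep.addOne = a.addOne.sleep := by
  rcases a with (_ | _ | n) | _
  · exact absurd rfl h
  all_goals rfl

end Nrho

open Nrho Function

variable {S : Type} [DecidableEq S]

theorem applyInstr_apply_of_ne (i : Instr S) {x y : S} (hxy : y ≠ x) (η : Config S) :
    applyInstr i y η x = η x ∨ applyInstr i y η x = (η x).addOne := by
  cases i with
  | jump w =>
    by_cases hw : x = w
    · subst hw; simp [applyInstr, update_of_ne hxy.symm]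
    · simp [applyInstr, update_of_ne hw, update_of_ne hxy.symm]
  | sleep => simp [applyInstr, update_of_ne hxy.symm]

/-- The hypotheses keep `subOne` and `sleep` away from their junk values at `nat 0`. -/
theorem applyInstr_comm (i j : Instr S) {x y : S} (hxy : x ≠ y) {η : Config S}
    (hx : η x ≠ nat 0) (hy : η y ≠ nat 0) :
    applyInstr i x (applyInstr j y η) = applyInstr j y (applyInstr i x η) := by
  funext s
  cases i <;> cases j <;> simp only [applyInstr, update_apply] <;> split_ifs <;> subst_vars <;>
    simp_all [subOne_addOne, sleep_addOne]

variable {I : IField S}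

theorem topple_fst {s : Config S × (S → ℕ)} {x : S} :
    (topple I s x).1 = applyInstr (I x (s.2 x)) x s.1 := rfl

theorem acceptableFrom_cons {s : Config S × (S → ℕ)} {x : S} {α : List S} :
    AcceptableFrom I s (x :: α) ↔ s.1 x ≠ nat 0 ∧ AcceptableFrom I (topple I s x) α := Iff.rfl

theorem legalFrom_cons {s : Config S × (S → ℕ)} {x : S} {α : List S} :
    LegalFrom I s (x :: α) ↔ nat 1 ≤ s.1 x ∧ LegalFrom I (topple I s x) α := Iff.rfl

theorem one_le_topple_fst_of_ne {s : Config S × (S → ℕ)} {x y : S} (hxy : y ≠ x)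
    (hx : nat 1 ≤ s.1 x) : nat 1 ≤ (topple I s y).1 x := by
  rcases applyInstr_apply_of_ne (I y (s.2 y)) hxy s.1 with h | h <;> rw [topple_fst, h]
  exacts [hx, one_le_addOne _]

theorem topple_fst_ne_nat_zero_of_ne {s : Config S × (S → ℕ)} {x y : S} (hxy : y ≠ x)
    (hx : s.1 x ≠ nat 0) : (topple I s y).1 x ≠ nat 0 := by
  rcases applyInstr_apply_of_ne (I y (s.2 y)) hxy s.1 with h | h <;> rw [topple_fst, h]
  exacts [hx, addOne_ne_nat_zero _]

theorem topple_comm {s : Config S × (S → ℕ)} {x y : S} (hxy : x ≠ y)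
    (hx : s.1 x ≠ nat 0) (hy : s.1 y ≠ nat 0) :
    topple I (topple I s x) y = topple I (topple I s y) x := by
  obtain ⟨η, h⟩ := s
  simp only [topple, update_of_ne hxy, update_of_ne hxy.symm]
  exact Prod.ext (applyInstr_comm _ _ hxy.symm hy hx) (update_comm hxy _ _ h)

theorem one_le_toppleSeq_fst_of_not_mem {s : Config S × (S → ℕ)} {x : S} {α : List S}
    (hxα : x ∉ α) (hx : nat 1 ≤ s.1 x) : nat 1 ≤ (toppleSeq I s α).1 x := by
  induction α generalizing s with
  | nil => exact hx
  | cons y α ih =>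
    rw [List.mem_cons, not_or] at hxα
    exact ih hxα.2 (one_le_topple_fst_of_ne (Ne.symm hxα.1) hx)

theorem AcceptableFrom.of_append_left {s : Config S × (S → ℕ)} {α₁ α₂ : List S}
    (h : AcceptableFrom I s (α₁ ++ α₂)) : AcceptableFrom I s α₁ := by
  induction α₁ generalizing s with
  | nil => trivial
  | cons y α₁ ih => exact ⟨h.1, ih h.2⟩

theorem toppleSeq_cons_append {s : Config S × (S → ℕ)} {x : S} {α₁ : List S} (α₂ : List S)
    (hxα₁ : x ∉ α₁) (hx : nat 1 ≤ s.1 x) (hα₁ : AcceptableFrom I s α₁) :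
    toppleSeq I s (x :: (α₁ ++ α₂)) = toppleSeq I s (α₁ ++ x :: α₂) := by
  induction α₁ generalizing s with
  | nil => rfl
  | cons y α₁ ih =>
    rw [List.mem_cons, not_or] at hxα₁
    rw [acceptableFrom_cons] at hα₁
    calc toppleSeq I s (x :: (y :: α₁ ++ α₂))
        = toppleSeq I (topple I (topple I s y) x) (α₁ ++ α₂) := by
          rw [← topple_comm hxα₁.1 (ne_nat_zero_of_one_le hx) hα₁.1]; rfl
      _ = toppleSeq I (topple I s y) (α₁ ++ x :: α₂) :=
          ih hxα₁.2 (one_le_topple_fst_of_ne (Ne.symm hxα₁.1) hx) hα₁.2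
      _ = toppleSeq I s (y :: α₁ ++ x :: α₂) := rfl

theorem AcceptableFrom.cons_append {s : Config S × (S → ℕ)} {x : S} {α₁ α₂ : List S}
    (hxα₁ : x ∉ α₁) (hx : nat 1 ≤ s.1 x) (hα : AcceptableFrom I s (α₁ ++ x :: α₂)) :
    AcceptableFrom I s (x :: (α₁ ++ α₂)) := by
  induction α₁ generalizing s with
  | nil => exact hα
  | cons y α₁ ih =>
    rw [List.mem_cons, not_or] at hxα₁
    rw [List.cons_append, acceptableFrom_cons] at hα
    obtain ⟨hy, hα⟩ := hα
    have hx₀ := ne_nat_zero_of_one_le hx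
    obtain ⟨-, hα⟩ := acceptableFrom_cons.1
      (ih hxα₁.2 (one_le_topple_fst_of_ne (Ne.symm hxα₁.1) hx) hα)
    rw [List.cons_append, acceptableFrom_cons, acceptableFrom_cons, topple_comm hxα₁.1 hx₀ hy]
    exact ⟨hx₀, topple_fst_ne_nat_zero_of_ne hxα₁.1 hy, hα⟩

theorem LegalFrom.subperm {V : Finset S} {s : Config S × (S → ℕ)} {α β : List S}
    (hβ : LegalFrom I s β) (hβV : ∀ x ∈ β, x ∈ V) (hα : AcceptableFrom I s α)
    (hstab : StableIn (toppleSeq I s α).1 V) : β.Subperm α := by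
  induction β generalizing s α with
  | nil => exact List.nil_subperm
  | cons z β ih =>
    obtain ⟨hz, hβ⟩ := legalFrom_cons.1 hβ
    have hzα : z ∈ α := by
      by_contra hzα
      exact not_le_rho_of_one_le (one_le_toppleSeq_fst_of_not_mem hzα hz)
        (hstab z (hβV z List.mem_cons_self))
    obtain ⟨α₁, α₂, rfl, hzα₁⟩ := List.eq_append_cons_of_mem hzα
    obtain ⟨-, hα'⟩ := acceptableFrom_cons.1 (hα.cons_append hzα₁ hz)
    have hstab' : StableIn (toppleSeq I (topple I s z) (α₁ ++ α₂)).1 V := by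
      rwa [← toppleSeq_cons_append α₂ hzα₁ hz hα.of_append_left] at hstab
    have hβα := ih hβ (fun x hx => hβV x (List.mem_cons_of_mem z hx)) hα' hstab'
    exact ((List.subperm_cons z).2 hβα).trans List.perm_middle.symm.subperm

end ARW

open ARW in
/-- **Least Action Principle.** If `α` is an acceptable sequence of topplings stabilizing `η`
in the finite set `V`, and `β ⊆ V` is a legal sequence of topplings for `η`,
then `m_β(x) ≤ m_α(x)` for every site `x`. -/
theorem least_action_principle {S : Type} [DecidableEq S] (I : IField S) (η : Config S)
    (V : Finset S) (α β : List S)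
    (hα : Acceptable I η α) (hstab : StableIn (Phi I η α) V)
    (hβ : Legal I η β) (hβV : ∀ x ∈ β, x ∈ V) :
    ∀ x, β.count x ≤ α.count x :=
  (LegalFrom.subperm hβ hβV hα hstab).count_le
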